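/- arXiv:1111.1738 — 4 statements merged into one kernel-verified Lean document; each statement's English description precedes it below -/
import Mathlib

section
/- Let κ > ω > 0, let ε ∈ (0,1), and let a, b, v ≥ 0 be real numbers. If a ≤ v·( a^{ω/κ} + b^{ω/κ} ) + b, then a ≤ ((1+ε)/(1−ε)) · ( 2·v^{κ/(κ−ω)}·ε^{−ω/(κ−ω)} + b ). -/
/-!
Write `s = ω/κ ∈ (0,1)`. By weighted AM-GM (Young's inequality), `v x^s ≤ ε x + K` for every
`x ≥ 0`, where `K = v^(1/(1-s)) ε^(-s/(1-s)) = v^(κ/(κ-ω)) ε^(-ω/(κ-ω))`. Applying this to `x = a`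
and `x = b` in the hypothesis gives `(1 - ε) a ≤ 2K + (1 + ε) b ≤ (1 + ε)(2K + b)`.
-/

open Real

lemma mul_rpow_le_mul_add (s ε v x : ℝ) (hs0 : 0 ≤ s) (hs1 : s < 1) (hε : 0 < ε)
    (hv : 0 ≤ v) (hx : 0 ≤ x) :
    v * x ^ s ≤ ε * x + v ^ (1 / (1 - s)) * ε ^ (-(s / (1 - s))) := by
  have h1s : 0 < 1 - s := by linarith
  set K := v ^ (1 / (1 - s)) * ε ^ (-(s / (1 - s)))
  have hK : 0 ≤ K := mul_nonneg (rpow_nonneg hv _) (rpow_nonneg hε.le _)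
  have hK_pow : K ^ (1 - s) = v * ε ^ (-s) := by
    rw [mul_rpow (rpow_nonneg hv _) (rpow_nonneg hε.le _), ← rpow_mul hv, ← rpow_mul hε.le,
      one_div_mul_cancel h1s.ne', rpow_one, neg_mul, div_mul_cancel₀ _ h1s.ne']
  have hεx_pow : (ε * x) ^ s * ε ^ (-s) = x ^ s := by
    rw [mul_rpow hε.le hx, mul_right_comm, ← rpow_add hε, add_neg_cancel, rpow_zero, one_mul]
  calc v * x ^ s = (ε * x) ^ s * K ^ (1 - s) := by rw [hK_pow, ← hεx_pow]; ring
    _ ≤ s * (ε * x) + (1 - s) * K :=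
      geom_mean_le_arith_mean2_weighted hs0 h1s.le (mul_nonneg hε.le hx) hK (by ring)
    _ ≤ ε * x + K := by nlinarith [mul_nonneg hε.le hx]

/-- Deterministic peeling inequality: if `a ≤ v·(a^(ω/κ) + b^(ω/κ)) + b` with
`κ > ω > 0`, `ε ∈ (0,1)` and `a, b, v ≥ 0`, then
`a ≤ ((1+ε)/(1-ε)) · (2·v^(κ/(κ-ω))·ε^(-ω/(κ-ω)) + b)`. -/
theorem peeling_inequality (κ ω ε a b v : ℝ)
    (hω : 0 < ω) (hκ : ω < κ) (hε0 : 0 < ε) (hε1 : ε < 1)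
    (ha : 0 ≤ a) (hb : 0 ≤ b) (hv : 0 ≤ v)
    (h : a ≤ v * (a ^ (ω / κ) + b ^ (ω / κ)) + b) :
    a ≤ ((1 + ε) / (1 - ε)) *
      (2 * v ^ (κ / (κ - ω)) * ε ^ (-(ω / (κ - ω))) + b) := by
  have hκ0 : 0 < κ := hω.trans hκ
  have hs0 : 0 ≤ ω / κ := (div_pos hω hκ0).le
  have hs1 : ω / κ < 1 := (div_lt_one hκ0).mpr hκ
  have h_outer : 1 / (1 - ω / κ) = κ / (κ - ω) := by
    field_simp [(sub_pos.mpr hκ).ne']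
  have h_inner : ω / κ / (1 - ω / κ) = ω / (κ - ω) := by
    field_simp [(sub_pos.mpr hκ).ne']
  set K := v ^ (κ / (κ - ω)) * ε ^ (-(ω / (κ - ω)))
  have hK : 0 ≤ K := mul_nonneg (rpow_nonneg hv _) (rpow_nonneg hε0.le _)
  have young_a := mul_rpow_le_mul_add _ ε v a hs0 hs1 hε0 hv ha
  have young_b := mul_rpow_le_mul_add _ ε v b hs0 hs1 hε0 hv hb
  rw [h_outer, h_inner] at young_a young_b
  have h_absorbed : (1 - ε) * a ≤ (1 + ε) * (2 * K + b) := by nlinarith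
  rw [div_mul_eq_mul_div, le_div_iff₀ (by linarith), mul_comm]
  linarith
end

section
/- Let (Ω, μ) be a probability space, let κ > ω > 0, set s = κ/(κ−ω), let ε ∈ (0,1), let b, v ≥ 0 and c ≥ 0 be real constants, and let A, Z : Ω → ℝ be nonnegative integrable random variables such that Z^s is integrable with E[Z^s] ≤ c^s. If almost surely A ≤ Z·v·( A^{ω/κ} + b^{ω/κ} ) + b, then E[A] ≤ ((1+ε)/(1−ε)) · ( 2·c^s·v^s·ε^{−ω/(κ−ω)} + b ). -/
open MeasureTheory

/-!
Young's inequality with weight `ε` bounds `Z v A^{ω/κ}` by `ε A + ε^{-ω/(κ-ω)} (Z v)^s`, and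
likewise with `b` in place of `A`. The hypothesis thus becomes
`(1 - ε) A ≤ 2 ε^{-ω/(κ-ω)} v^s Z^s + (1 + ε) b` almost surely; taking expectations and using
`E[Z^s] ≤ c^s` gives the claim.
-/

namespace Real

theorem mul_rpow_inv_le_mul_add_rpow_mul_rpow {p q ε x y : ℝ} (hpq : p.HolderConjugate q)
    (hε : 0 < ε) (hx : 0 ≤ x) (hy : 0 ≤ y) :
    x * y ^ p⁻¹ ≤ ε * y + ε ^ (-(q / p)) * x ^ q := by
  have hεy : 0 ≤ ε * y := mul_nonneg hε.le hy
  have hfirst : ((ε * y) ^ p⁻¹) ^ p = ε * y := rpow_inv_rpow hεy hpq.ne_zero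
  have hsecond : (x * ε ^ (-p⁻¹)) ^ q = ε ^ (-(q / p)) * x ^ q := by
    rw [mul_rpow hx (rpow_nonneg hε.le _), ← rpow_mul hε.le, neg_mul, inv_mul_eq_div, mul_comm]
  have hyoung := young_inequality_of_nonneg (rpow_nonneg hεy p⁻¹)
    (mul_nonneg hx (rpow_nonneg hε.le (-p⁻¹))) hpq
  rw [hfirst, hsecond] at hyoung
  have hsplit : x * y ^ p⁻¹ = (ε * y) ^ p⁻¹ * (x * ε ^ (-p⁻¹)) := by
    rw [mul_rpow hε.le hy, rpow_neg hε.le]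
    field_simp [(rpow_pos_of_pos hε p⁻¹).ne']
  have hdiv₁ : ε * y / p ≤ ε * y := div_le_self hεy hpq.lt.le
  have hdiv₂ : ε ^ (-(q / p)) * x ^ q / q ≤ ε ^ (-(q / p)) * x ^ q :=
    div_le_self (by positivity) hpq.symm.lt.le
  linarith

theorem one_sub_mul_le_of_le_mul_rpow_inv_add {p q ε a b w : ℝ} (hpq : p.HolderConjugate q)
    (hε : 0 < ε) (ha : 0 ≤ a) (hb : 0 ≤ b) (hw : 0 ≤ w)
    (h : a ≤ w * (a ^ p⁻¹ + b ^ p⁻¹) + b) :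
    (1 - ε) * a ≤ 2 * ε ^ (-(q / p)) * w ^ q + (1 + ε) * b := by
  have hyoung_a := mul_rpow_inv_le_mul_add_rpow_mul_rpow hpq hε hw ha
  have hyoung_b := mul_rpow_inv_le_mul_add_rpow_mul_rpow hpq hε hw hb
  linarith [mul_add w (a ^ p⁻¹) (b ^ p⁻¹)]

end Real

theorem expected_peeling_inequality_general
    {Ω : Type*} [MeasurableSpace Ω] (μ : Measure Ω) [IsProbabilityMeasure μ]
    (κ ω ε b v c : ℝ) (hω : 0 < ω) (hκ : ω < κ) (hε0 : 0 < ε) (hε1 : ε < 1)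
    (hb : 0 ≤ b) (hv : 0 ≤ v)
    (A Z : Ω → ℝ) (hA0 : ∀ x, 0 ≤ A x) (hZ0 : ∀ x, 0 ≤ Z x)
    (hAint : Integrable A μ)
    (hZs : Integrable (fun x => Z x ^ (κ / (κ - ω))) μ)
    (hZm : ∫ x, Z x ^ (κ / (κ - ω)) ∂μ ≤ c ^ (κ / (κ - ω)))
    (hae : ∀ᵐ x ∂μ, A x ≤ Z x * v * (A x ^ (ω / κ) + b ^ (ω / κ)) + b) :
    ∫ x, A x ∂μ ≤ ((1 + ε) / (1 - ε)) *
      (2 * c ^ (κ / (κ - ω)) * v ^ (κ / (κ - ω)) * ε ^ (-(ω / (κ - ω))) + b) := by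
  set s := κ / (κ - ω) with hs
  set K := 2 * ε ^ (-(ω / (κ - ω))) * v ^ s
  have hκ0 : 0 < κ := hω.trans hκ
  have hκω : 0 < κ - ω := by linarith
  have hpq : (κ / ω).HolderConjugate s := by
    rw [Real.holderConjugate_iff]
    exact ⟨(one_lt_div hω).2 hκ, by rw [hs]; field_simp; ring⟩
  have hpoint : ∀ᵐ x ∂μ, (1 - ε) * A x ≤ K * Z x ^ s + (1 + ε) * b := by
    filter_upwards [hae] with x hx
    have h := Real.one_sub_mul_le_of_le_mul_rpow_inv_add hpq hε0 (hA0 x) hb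
      (mul_nonneg (hZ0 x) hv) (by rwa [inv_div])
    rwa [Real.mul_rpow (hZ0 x) hv, show s / (κ / ω) = ω / (κ - ω) by rw [hs]; field_simp,
      show 2 * ε ^ (-(ω / (κ - ω))) * (Z x ^ s * v ^ s) = K * Z x ^ s by ring] at h
  have hint : ∫ x, (1 - ε) * A x ∂μ ≤ ∫ x, (K * Z x ^ s + (1 + ε) * b) ∂μ :=
    integral_mono_ae (hAint.const_mul (1 - ε))
      ((hZs.const_mul K).add (integrable_const ((1 + ε) * b))) hpoint
  rw [integral_const_mul, integral_add (hZs.const_mul K) (integrable_const _),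
    integral_const_mul, integral_const, probReal_univ, one_smul] at hint
  have hK : 0 ≤ K := by positivity
  have hZm0 : 0 ≤ ∫ x, Z x ^ s ∂μ := integral_nonneg fun x => Real.rpow_nonneg (hZ0 x) s
  have hKc : 0 ≤ K * c ^ s := mul_nonneg hK (hZm0.trans hZm)
  rw [show 2 * c ^ s * v ^ s * ε ^ (-(ω / (κ - ω))) = K * c ^ s by ring,
    div_mul_eq_mul_div, le_div_iff₀ (by linarith)]
  nlinarith [mul_le_mul_of_nonneg_left hZm hK, mul_nonneg hε0.le hKc]

/-- Expectation version of the peeling argument: on a probability space, if the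
nonnegative integrable random variables `A`, `Z` satisfy `E[Z^s] ≤ c^s` with
`s = κ/(κ-ω)` and almost surely `A ≤ Z·v·(A^(ω/κ) + b^(ω/κ)) + b`, then
`E[A] ≤ ((1+ε)/(1-ε)) · (2·c^s·v^s·ε^(-ω/(κ-ω)) + b)`. -/
theorem expected_peeling_inequality
    {Ω : Type*} [MeasurableSpace Ω] (μ : Measure Ω) [IsProbabilityMeasure μ]
    (κ ω ε b v c : ℝ) (hω : 0 < ω) (hκ : ω < κ) (hε0 : 0 < ε) (hε1 : ε < 1)
    (hb : 0 ≤ b) (hv : 0 ≤ v) (hc : 0 ≤ c)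
    (A Z : Ω → ℝ) (hA0 : ∀ x, 0 ≤ A x) (hZ0 : ∀ x, 0 ≤ Z x)
    (hAint : Integrable A μ) (hZint : Integrable Z μ)
    (hZs : Integrable (fun x => Z x ^ (κ / (κ - ω))) μ)
    (hZm : ∫ x, Z x ^ (κ / (κ - ω)) ∂μ ≤ c ^ (κ / (κ - ω)))
    (hae : ∀ᵐ x ∂μ, A x ≤ Z x * v * (A x ^ (ω / κ) + b ^ (ω / κ)) + b) :
    ∫ x, A x ∂μ ≤ ((1 + ε) / (1 - ε)) *
      (2 * c ^ (κ / (κ - ω)) * v ^ (κ / (κ - ω)) * ε ^ (-(ω / (κ - ω))) + b) :=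
  expected_peeling_inequality_general μ κ ω ε b v c hω hκ hε0 hε1 hb hv A Z hA0 hZ0 hAint hZs hZm
    hae
end

section
/- Let P and Q be probability measures on [0,1]^d with densities p and q with respect to Lebesgue measure, and assume q(x) ≥ c > 0 for almost every x. Let {R_0,…,R_{L−1}} be a finite measurable partition of [0,1]^d with Q(R_i) > 0 and P(R_i) > 0 for all i. Let ψ = Σ_i ψ_i·1_{R_i} with ψ_i = P(R_i)/Q(R_i), and let φ = Σ_i c_i·1_{R_i} with c_i > 0; assume ψ_i ≤ M and c_i ≤ M for all i, where M < ∞. Then D(ψ) − D(φ) ≥ (c/(2M)) · ‖ψ − φ‖_{L²}², where ‖·‖_{L²} is the L² norm with respect to Lebesgue measure on [0,1]^d; in particular, the margin condition holds with exponent κ = 2 when the theoretically optimal rule lies in the candidate class. -/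
/-!
On each cell `R i` both rules are constant, so `D(ψ) - D(φ)` is a sum over cells; since
`P(R i) = ψ_i Q(R i)`, the term of cell `i` is `Q(R i) (ψ_i log (ψ_i / c_i) - ψ_i + c_i)`.
On `[0, M]` the function `t ↦ t log (t / y) - t + y` vanishes to second order at `y` and has
second derivative `1 / t ≥ 1 / M`, so this is at least `Q(R i) (ψ_i - c_i)² / (2M)`, and
`Q(R i) ≥ c λ(R i)` because `q ≥ c`.
Summing over the cells gives `c / (2M)` times the squared `L²` distance of the two step functions.
-/

open MeasureTheory

namespace Real

variable {x y M : ℝ}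

theorem sq_sub_div_add_le_mul_log_div_sub_add (hy : 0 < y) (hyx : y ≤ x) :
    (x - y) ^ 2 / (x + y) ≤ x * log (x / y) - x + y := by
  have hx : 0 < x := hy.trans_le hyx
  have hxy : 0 < x + y := by positivity
  have hlog : 2 * (x / y - 1) / (x / y - 1 + 2) ≤ log (x / y) := by
    simpa using le_log_one_add_of_nonneg (sub_nonneg.2 ((one_le_div hy).2 hyx))
  have hlog' : 2 * (x - y) / (x + y) ≤ log (x / y) := by
    have hden : x / y - 1 + 2 = (x + y) / y := by field_simp; ring
    rwa [hden, div_sub_one hy.ne', mul_div_assoc', div_div_div_cancel_right₀ hy.ne'] at hlog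
  calc (x - y) ^ 2 / (x + y) = x * (2 * (x - y) / (x + y)) - x + y := by
        rw [div_eq_iff hxy.ne']; field_simp; ring
    _ ≤ x * log (x / y) - x + y := by gcongr

theorem sq_sub_div_two_mul_le_mul_log_div_sub_add (hx : 0 ≤ x) (hy : 0 < y) (hxy : x ≤ y) :
    (x - y) ^ 2 / (2 * y) ≤ x * log (x / y) - x + y := by
  rcases hx.eq_or_lt with rfl | hx
  · field_simp; nlinarith
  have hlog : (x / y - (x / y)⁻¹) / 2 ≤ log (x / y) := by
    rw [← sinh_log (by positivity), sinh_le_self_iff]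
    exact log_nonpos (by positivity) ((div_le_one hy).2 hxy)
  calc (x - y) ^ 2 / (2 * y) = x * ((x / y - (x / y)⁻¹) / 2) - x + y := by field_simp; ring
    _ ≤ x * log (x / y) - x + y := by gcongr

theorem mul_log_div_eq (x : ℝ) (hy : y ≠ 0) : x * log (x / y) = x * log x - x * log y := by
  rcases eq_or_ne x 0 with rfl | hx
  · simp
  · rw [log_div hx hy]; ring

theorem sq_sub_div_two_mul_le_mul_log_div_sub_add_of_le_of_le (hx : 0 ≤ x) (hy : 0 < y)
    (hxM : x ≤ M) (hyM : y ≤ M) :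
    (x - y) ^ 2 / (2 * M) ≤ x * log (x / y) - x + y := by
  rcases le_total y x with hyx | hxy
  · refine le_trans ?_ (sq_sub_div_add_le_mul_log_div_sub_add hy hyx)
    gcongr; linarith
  · refine le_trans ?_ (sq_sub_div_two_mul_le_mul_log_div_sub_add hx hy hxy)
    gcongr

end Real

section StepFunction

variable {α ι : Type*} [Fintype ι] {R : ι → Set α} {x : α}

noncomputable def stepFunction (R : ι → Set α) (g : ι → ℝ) (x : α) : ℝ :=
  ∑ i, (R i).indicator (fun _ => g i) x

theorem stepFunction_apply_of_mem (hR : Pairwise (Function.onFun Disjoint R)) (g : ι → ℝ)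
    {j : ι} (hx : x ∈ R j) : stepFunction R g x = g j := by
  rw [stepFunction, Finset.sum_eq_single_of_mem j (Finset.mem_univ j)]
  · exact Set.indicator_of_mem hx _
  · exact fun i _ hij => Set.indicator_of_notMem (hR hij |>.notMem_of_mem_right hx) _

theorem stepFunction_apply_of_forall_notMem (g : ι → ℝ) (hx : ∀ i, x ∉ R i) :
    stepFunction R g x = 0 :=
  Finset.sum_eq_zero fun i _ => Set.indicator_of_notMem (hx i) _

theorem comp_stepFunction (hR : Pairwise (Function.onFun Disjoint R)) (g : ι → ℝ)
    {F : ℝ → ℝ} (hF : F 0 = 0) (x : α) :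
    F (stepFunction R g x) = stepFunction R (fun i => F (g i)) x := by
  by_cases hx : ∃ j, x ∈ R j
  · obtain ⟨j, hj⟩ := hx
    rw [stepFunction_apply_of_mem hR _ hj, stepFunction_apply_of_mem hR _ hj]
  · simp only [not_exists] at hx
    rw [stepFunction_apply_of_forall_notMem _ hx, stepFunction_apply_of_forall_notMem _ hx, hF]

theorem stepFunction_sub (g h : ι → ℝ) (x : α) :
    stepFunction R g x - stepFunction R h x = stepFunction R (g - h) x := by
  simp only [stepFunction, Pi.sub_apply, Set.indicator_sub, Finset.sum_sub_distrib]

variable [MeasurableSpace α] {μ : Measure α}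

theorem integral_stepFunction (hRm : ∀ i, MeasurableSet (R i)) (hμR : ∀ i, μ (R i) ≠ ⊤)
    (g : ι → ℝ) : ∫ x, stepFunction R g x ∂μ = ∑ i, μ.real (R i) * g i := by
  simp only [stepFunction]
  rw [integral_finsetSum]
  · simp only [integral_indicator_const _ (hRm _), smul_eq_mul]
  · exact fun i _ => (integrable_indicator_iff (hRm i)).2 (integrableOn_const (hμR i))

theorem integral_comp_stepFunction (hRm : ∀ i, MeasurableSet (R i))
    (hR : Pairwise (Function.onFun Disjoint R)) (hμR : ∀ i, μ (R i) ≠ ⊤) (g : ι → ℝ)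
    {F : ℝ → ℝ} (hF : F 0 = 0) :
    ∫ x, F (stepFunction R g x) ∂μ = ∑ i, μ.real (R i) * F (g i) := by
  simp only [comp_stepFunction hR g hF, integral_stepFunction hRm hμR]

end StepFunction

noncomputable def divergence {α : Type*} [MeasurableSpace α] (P Q : Measure α) (φ : α → ℝ) : ℝ :=
  1 + ∫ x, Real.log (φ x) ∂P - ∫ x, φ x ∂Q

theorem divergence_stepFunction {α ι : Type*} [Fintype ι] [MeasurableSpace α]
    {P Q : Measure α} [IsFiniteMeasure P] [IsFiniteMeasure Q] {R : ι → Set α}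
    (hRm : ∀ i, MeasurableSet (R i)) (hR : Pairwise (Function.onFun Disjoint R)) (g : ι → ℝ) :
    divergence P Q (stepFunction R g)
      = 1 + ∑ i, (P.real (R i) * Real.log (g i) - Q.real (R i) * g i) := by
  rw [divergence, integral_comp_stepFunction hRm hR (fun _ => measure_ne_top _ _) g Real.log_zero,
    integral_stepFunction hRm (fun _ => measure_ne_top _ _), Finset.sum_sub_distrib, add_sub_assoc]

theorem mul_measureReal_le_measureReal_of_eq_withDensity {α : Type*} [MeasurableSpace α]
    {μ Q : Measure α} [IsFiniteMeasure Q] {f : α → ℝ} {c : ℝ}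
    (hQ : Q = μ.withDensity fun x => ENNReal.ofReal (f x)) (hf : ∀ᵐ x ∂μ, c ≤ f x)
    (s : Set α) : c * μ.real s ≤ Q.real s := by
  have hle : ENNReal.ofReal c * μ s ≤ Q s := by
    rw [← setLIntegral_const, hQ]
    refine le_trans (lintegral_mono_ae ?_) (withDensity_apply_le _ s)
    filter_upwards [ae_restrict_of_ae hf] with x hx using ENNReal.ofReal_le_ofReal hx
  calc c * μ.real s ≤ max c 0 * μ.real s := by gcongr; exact le_max_left c 0
    _ = (ENNReal.ofReal c * μ s).toReal := by
      rw [ENNReal.toReal_mul, ENNReal.toReal_ofReal', measureReal_def]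
    _ ≤ Q.real s := ENNReal.toReal_mono (measure_ne_top Q s) hle

theorem margin_condition_kappa_two_general
    (d L : ℕ)
    (c M : ℝ) (hM : 0 < M)
    (q : (Fin d → ℝ) → ℝ)
    (P Q : Measure (Fin d → ℝ)) [IsProbabilityMeasure P] [IsProbabilityMeasure Q]
    (hQ : Q = (volume.restrict (Set.Icc (0 : Fin d → ℝ) 1)).withDensity
        fun x => ENNReal.ofReal (q x))
    (hq : ∀ᵐ x ∂(volume.restrict (Set.Icc (0 : Fin d → ℝ) 1)), c ≤ q x)
    (R : Fin L → Set (Fin d → ℝ)) (hRmeas : ∀ i, MeasurableSet (R i))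
    (hRdisj : Pairwise (Function.onFun Disjoint R))
    (hQR : ∀ i, 0 < Q (R i))
    (cs : Fin L → ℝ) (hcs : ∀ i, 0 < cs i) (hcsM : ∀ i, cs i ≤ M)
    (hψM : ∀ i, (P (R i)).toReal / (Q (R i)).toReal ≤ M)
    (ψ φ : (Fin d → ℝ) → ℝ)
    (hψ : ψ = fun x => ∑ i, Set.indicator (R i)
        (fun _ => (P (R i)).toReal / (Q (R i)).toReal) x)
    (hφ : φ = fun x => ∑ i, Set.indicator (R i) (fun _ => cs i) x) :
    (1 + ∫ x, Real.log (ψ x) ∂P - ∫ x, ψ x ∂Q)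
      - (1 + ∫ x, Real.log (φ x) ∂P - ∫ x, φ x ∂Q)
      ≥ (c / (2 * M)) * ∫ x in Set.Icc (0 : Fin d → ℝ) 1, (ψ x - φ x) ^ 2 := by
  set ν := volume.restrict (Set.Icc (0 : Fin d → ℝ) 1)
  set w : Fin L → ℝ := fun i => P.real (R i) / Q.real (R i)
  obtain rfl : ψ = stepFunction R w := hψ
  obtain rfl : φ = stepFunction R cs := hφ
  have : IsFiniteMeasure ν := isFiniteMeasure_restrict.2 isCompact_Icc.measure_lt_top.ne
  have hQR' : ∀ i, 0 < Q.real (R i) := fun i => ENNReal.toReal_pos (hQR i).ne' (measure_ne_top Q _)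
  have hw : ∀ i, 0 ≤ w i := fun i => div_nonneg measureReal_nonneg measureReal_nonneg
  change divergence P Q (stepFunction R w) - divergence P Q (stepFunction R cs) ≥ _
  simp only [divergence_stepFunction hRmeas hRdisj, stepFunction_sub]
  rw [integral_comp_stepFunction hRmeas hRdisj (fun i => measure_ne_top ν (R i)) _
      (F := (· ^ 2)) (zero_pow two_ne_zero), ge_iff_le, add_sub_add_left_eq_sub, ← Finset.sum_sub_distrib, Finset.mul_sum]
  refine Finset.sum_le_sum fun i _ => ?_
  have hPw : P.real (R i) = w i * Q.real (R i) := (div_mul_cancel₀ _ (hQR' i).ne').symm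
  calc c / (2 * M) * (ν.real (R i) * (w - cs) i ^ 2)
      = (c * ν.real (R i)) * ((w i - cs i) ^ 2 / (2 * M)) := by rw [Pi.sub_apply]; ring
    _ ≤ Q.real (R i) * (w i * Real.log (w i / cs i) - w i + cs i) :=
      mul_le_mul (mul_measureReal_le_measureReal_of_eq_withDensity hQ hq (R i))
        (Real.sq_sub_div_two_mul_le_mul_log_div_sub_add_of_le_of_le (hw i) (hcs i) (hψM i)
          (hcsM i)) (by positivity) (hQR' i).le
    _ = _ := by rw [Real.mul_log_div_eq _ (hcs i).ne', hPw]; ring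

/-- Margin condition with exponent `κ = 2` when the optimal rule lies in the
candidate class: for `P`, `Q` with densities `p`, `q` on `[0,1]^d`, `q ≥ c > 0`
a.e., a finite measurable partition `{R_i}` of `[0,1]^d`, the likelihood-ratio rule
`ψ = Σ_i (P(R_i)/Q(R_i))·1_{R_i}` and any rule `φ = Σ_i c_i·1_{R_i}` with
`0 < c_i ≤ M` and `P(R_i)/Q(R_i) ≤ M`, one has
`D(ψ) - D(φ) ≥ (c/(2M))·‖ψ - φ‖²_{L²}`, where `D(φ) = 1 + ∫ log φ dP - ∫ φ dQ`. -/
theorem margin_condition_kappa_two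
    (d L : ℕ) (hd : 1 ≤ d) (hL : 1 ≤ L)
    (c M : ℝ) (hc : 0 < c) (hM : 0 < M)
    (p q : (Fin d → ℝ) → ℝ)
    (P Q : Measure (Fin d → ℝ)) [IsProbabilityMeasure P] [IsProbabilityMeasure Q]
    (hP : P = (volume.restrict (Set.Icc (0 : Fin d → ℝ) 1)).withDensity
        fun x => ENNReal.ofReal (p x))
    (hQ : Q = (volume.restrict (Set.Icc (0 : Fin d → ℝ) 1)).withDensity
        fun x => ENNReal.ofReal (q x))
    (hq : ∀ᵐ x ∂(volume.restrict (Set.Icc (0 : Fin d → ℝ) 1)), c ≤ q x)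
    (R : Fin L → Set (Fin d → ℝ)) (hRmeas : ∀ i, MeasurableSet (R i))
    (hRdisj : Pairwise (Function.onFun Disjoint R))
    (hRcover : (⋃ i, R i) = Set.Icc (0 : Fin d → ℝ) 1)
    (hPR : ∀ i, 0 < P (R i)) (hQR : ∀ i, 0 < Q (R i))
    (cs : Fin L → ℝ) (hcs : ∀ i, 0 < cs i) (hcsM : ∀ i, cs i ≤ M)
    (hψM : ∀ i, (P (R i)).toReal / (Q (R i)).toReal ≤ M)
    (ψ φ : (Fin d → ℝ) → ℝ)
    (hψ : ψ = fun x => ∑ i, Set.indicator (R i)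
        (fun _ => (P (R i)).toReal / (Q (R i)).toReal) x)
    (hφ : φ = fun x => ∑ i, Set.indicator (R i) (fun _ => cs i) x) :
    (1 + ∫ x, Real.log (ψ x) ∂P - ∫ x, ψ x ∂Q)
      - (1 + ∫ x, Real.log (φ x) ∂P - ∫ x, φ x ∂Q)
      ≥ (c / (2 * M)) * ∫ x in Set.Icc (0 : Fin d → ℝ) 1, (ψ x - φ x) ^ 2 :=
  margin_condition_kappa_two_general d L c M hM q P Q hQ hq R hRmeas hRdisj hQR cs hcs hcsM hψM ψ φ
    hψ hφ
end

section
/- (Approximation error) Let d ≥ 1, L ≥ 2, J ∈ ℕ, 0 < m ≤ M < ∞, 0 < c ≤ C < ∞ with m ≤ c/C and C/c ≤ M, and β > 0. Let P and Q be probability measures on [0,1]^d with densities p and q with respect to Lebesgue measure satisfying c ≤ p(x) ≤ C and c ≤ q(x) ≤ C for almost every x. Let ψ be a function on [0,1]^d taking at most L distinct values, all lying in [m, M], such that ψ is locally constant at every point of [0,1]^d ∖ B(ψ), where the boundary set B(ψ) satisfies: for every r > 0, B(ψ) can be covered by at most β·r^{−(d−1)} sets of diameter at most r. Let Φ(L,J,m,M)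 denote the class of functions φ = Σ_{i=0}^{L−1} c_i·1_{R_i} where m ≤ c_i ≤ M and {R_0,…,R_{L−1}} is a partition of [0,1]^d in which each R_i is a union of dyadic cubes of side length 2^{−J}. Then there exists φ ∈ Φ(L,J,m,M) with D(ψ) − D(φ) ≤ K·2^{−J}, where K = ((C + c·m)/m) · 2^{2d}·β·L·( M + (C/c)·(C/c + 1) ). Consequently D(ψ) − sup_{φ ∈ Φ(L,J,m,M)} D(φ) ≤ K·2^{−J}. -/
open MeasureTheory

noncomputable section

/-- The unit cube `[0,1]^d` in Euclidean space. -/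
def unitCube (d : ℕ) : Set (EuclideanSpace ℝ (Fin d)) :=
  {x | ∀ i, 0 ≤ x i ∧ x i ≤ 1}

/-- The closed dyadic cube of side `2^{-J}` indexed by `k : Fin d → Fin (2^J)`,
i.e. `Π_i [k_i·2^{-J}, (k_i+1)·2^{-J}]`. -/
def dyadicCube (d J : ℕ) (k : Fin d → Fin (2 ^ J)) : Set (EuclideanSpace ℝ (Fin d)) :=
  {x | ∀ i, (k i : ℝ) / 2 ^ J ≤ x i ∧ x i ≤ ((k i : ℝ) + 1) / 2 ^ J}

/-- The candidate class `Φ(L,J,m,M)`: piecewise constant functions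
`φ = Σ_{i<L} c_i·1_{R_i}` with `m ≤ c_i ≤ M`, where `{R_i}` is a partition of
`[0,1]^d` in which each `R_i` is a union of dyadic cubes of side `2^{-J}`. -/
def candidateClass (d L J : ℕ) (m M : ℝ) : Set (EuclideanSpace ℝ (Fin d) → ℝ) :=
  {φ | ∃ (cs : Fin L → ℝ) (K : Fin L → Set (Fin d → Fin (2 ^ J))),
    (∀ i, m ≤ cs i ∧ cs i ≤ M) ∧
    Pairwise (Function.onFun Disjoint K) ∧
    (⋃ i, K i) = Set.univ ∧
    φ = fun x => ∑ i, Set.indicator (⋃ k ∈ K i, dyadicCube d J k) (fun _ => cs i) x}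

/-- The divergence functional `D(φ) = 1 + ∫ log φ dP - ∫ φ dQ`. -/
def Dfun {d : ℕ} (P Q : Measure (EuclideanSpace ℝ (Fin d)))
    (φ : EuclideanSpace ℝ (Fin d) → ℝ) : ℝ :=
  1 + ∫ x, Real.log (φ x) ∂P - ∫ x, φ x ∂Q

/-!
Sample `ψ` at one point of every dyadic cube of side `r = 2^{-J}` and relabel the at most `L`
sampled values by `Fin L`; this is a member `φ` of `Φ(L,J,m,M)`. On a cube missing `B`, `ψ` is
continuous with finitely many values, hence constant because cubes are connected, so `φ = ψ` off
the cubes meeting `B` and the null grid of cube faces. A covering set of diameter `≤ r` only meets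
cubes inside a sup-ball of radius `2r`, so the cubes meeting `B` have volume at most
`β r^{-(d-1)} (4r)^d = β 4^d r`. There the integrands of `D` differ by at most `log M - log m`
and `M - m`, and the densities are at most `C`; the constant `K` absorbs
`(log M - log m + M - m) C` since `L ≥ 2` and `m ≤ 1`. The same covering estimate with `r → 0`
shows that `B` is null, which makes `ψ` almost everywhere measurable.
-/

open Set Filter Topology

section SupBall

variable {ι : Type*} [Fintype ι]

/-- The closed ball for the sup distance of coordinates. -/
def supClosedBall (z : EuclideanSpace ℝ ι) (ρ : ℝ) : Set (EuclideanSpace ℝ ι) :=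
  WithLp.ofLp ⁻¹' Metric.closedBall (WithLp.ofLp z) ρ

lemma dist_ofLp_le_dist (x y : EuclideanSpace ℝ ι) :
    dist (WithLp.ofLp x) (WithLp.ofLp y) ≤ dist x y := by
  simpa using (PiLp.lipschitzWith_ofLp 2 fun _ : ι => ℝ).dist_le_mul x y

lemma volume_supClosedBall (z : EuclideanSpace ℝ ι) {ρ : ℝ} (hρ : 0 ≤ ρ) :
    volume (supClosedBall z ρ) = ENNReal.ofReal ((2 * ρ) ^ Fintype.card ι) := by
  rw [supClosedBall, (PiLp.volume_preserving_ofLp ι).measure_preimage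
    measurableSet_closedBall.nullMeasurableSet, Real.volume_pi_closedBall _ hρ]

lemma exists_subset_supClosedBall_of_ediam_le {s : Set (EuclideanSpace ℝ ι)} {r : ℝ}
    (hr : 0 ≤ r) (hs : Metric.ediam s ≤ ENNReal.ofReal r) :
    ∃ z : EuclideanSpace ℝ ι, s ⊆ supClosedBall z r := by
  rcases s.eq_empty_or_nonempty with rfl | ⟨z, hz⟩
  · exact ⟨0, empty_subset _⟩
  refine ⟨z, fun w hw => (dist_ofLp_le_dist w z).trans ?_⟩
  rw [← ENNReal.ofReal_le_ofReal_iff hr, ← edist_dist]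
  exact (Metric.edist_le_ediam_of_mem hw hz).trans hs

lemma volume_biUnion_le_card_mul {α : Type*} (𝒞 : Finset α)
    (f : α → Set (EuclideanSpace ℝ ι)) {ρ : ℝ} (hρ : 0 ≤ ρ)
    (hf : ∀ a ∈ 𝒞, ∃ z, f a ⊆ supClosedBall z ρ) :
    volume (⋃ a ∈ 𝒞, f a) ≤ 𝒞.card * ENNReal.ofReal ((2 * ρ) ^ Fintype.card ι) := by
  calc volume (⋃ a ∈ 𝒞, f a)
      ≤ ∑ a ∈ 𝒞, volume (f a) := measure_biUnion_finset_le _ _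
    _ ≤ ∑ _a ∈ 𝒞, ENNReal.ofReal ((2 * ρ) ^ Fintype.card ι) := by
      refine Finset.sum_le_sum fun a ha => ?_
      obtain ⟨z, hz⟩ := hf a ha
      exact (measure_mono hz).trans (volume_supClosedBall z hρ).le
    _ = 𝒞.card * ENNReal.ofReal ((2 * ρ) ^ Fintype.card ι) := by
      rw [Finset.sum_const, nsmul_eq_mul]

lemma volume_setOf_apply_eq (i : ι) (t : ℝ) :
    volume {x : EuclideanSpace ℝ ι | x i = t} = 0 := by
  change volume (WithLp.ofLp (p := 2) ⁻¹' {f : ι → ℝ | f i = t}) = 0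
  rw [(PiLp.volume_preserving_ofLp ι).measure_preimage
    (measurableSet_eq_fun (measurable_pi_apply i) measurable_const).nullMeasurableSet,
    volume_pi, Measure.pi_hyperplane]

end SupBall

lemma rpow_neg_sub_one_mul_pow {r : ℝ} (hr : 0 < r) (d : ℕ) :
    r ^ (-((d : ℝ) - 1)) * r ^ d = r := by
  rw [← Real.rpow_natCast, ← Real.rpow_add hr, neg_sub, sub_add_cancel, Real.rpow_one]

section Covering

variable {d : ℕ} {β r : ℝ}

lemma volume_biUnion_le_of_card_le {α : Type*} {𝒞 : Finset α}
    (f : α → Set (EuclideanSpace ℝ (Fin d))) (hr : 0 < r) {a : ℝ} (ha : 0 ≤ a)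
    (hcard : (𝒞.card : ℝ) ≤ β * r ^ (-((d : ℝ) - 1)))
    (hf : ∀ s ∈ 𝒞, ∃ z, f s ⊆ supClosedBall z (a * r)) :
    volume (⋃ s ∈ 𝒞, f s) ≤ ENNReal.ofReal (β * (2 * a) ^ d * r) := by
  refine (volume_biUnion_le_card_mul 𝒞 f (by positivity) hf).trans ?_
  rw [Fintype.card_fin, ← ENNReal.ofReal_natCast, ← ENNReal.ofReal_mul (Nat.cast_nonneg _)]
  refine ENNReal.ofReal_le_ofReal ?_
  calc (𝒞.card : ℝ) * (2 * (a * r)) ^ d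
      ≤ β * r ^ (-((d : ℝ) - 1)) * (2 * (a * r)) ^ d := by gcongr
    _ = β * (2 * a) ^ d * (r ^ (-((d : ℝ) - 1)) * r ^ d) := by ring
    _ = β * (2 * a) ^ d * r := by rw [rpow_neg_sub_one_mul_pow hr]

lemma volume_eq_zero_of_forall_covering {B : Set (EuclideanSpace ℝ (Fin d))}
    (hcov : ∀ r : ℝ, 0 < r → ∃ 𝒞 : Finset (Set (EuclideanSpace ℝ (Fin d))),
      (𝒞.card : ℝ) ≤ β * r ^ (-((d : ℝ) - 1)) ∧
      (∀ s ∈ 𝒞, Metric.ediam s ≤ ENNReal.ofReal r) ∧ B ⊆ ⋃ s ∈ 𝒞, s) :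
    volume B = 0 := by
  have hB : ∀ r > 0, volume B ≤ ENNReal.ofReal (β * 2 ^ d * r) := fun r hr => by
    obtain ⟨𝒞, hcard, hdiam, hB⟩ := hcov r hr
    have h := volume_biUnion_le_of_card_le id hr zero_le_one hcard fun s hs => by
      simpa using exists_subset_supClosedBall_of_ediam_le hr.le (hdiam s hs)
    rw [mul_one] at h
    exact (measure_mono hB).trans h
  have hlim : Tendsto (fun r => ENNReal.ofReal (β * 2 ^ d * r)) (𝓝[>] 0) (𝓝 0) := by
    have : Tendsto (fun r : ℝ => β * 2 ^ d * r) (𝓝 0) (𝓝 0) := by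
      simpa using (tendsto_id (x := 𝓝 (0 : ℝ))).const_mul (β * 2 ^ d)
    simpa using (ENNReal.tendsto_ofReal this).mono_left nhdsWithin_le_nhds
  exact nonpos_iff_eq_zero.1 (ge_of_tendsto hlim (eventually_nhdsWithin_of_forall hB))

end Covering

lemma exists_nat_lt_div_le_le_div {N : ℕ} (hN : 0 < N) {t : ℝ} (ht₀ : 0 ≤ t)
    (ht₁ : t ≤ 1) :
    ∃ k < N, (k : ℝ) / N ≤ t ∧ t ≤ ((k : ℝ) + 1) / N := by
  have hN' : (0 : ℝ) < N := by exact_mod_cast hN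
  refine ⟨min ⌊t * N⌋₊ (N - 1), by omega, ?_, ?_⟩
  · rw [div_le_iff₀ hN']
    exact (Nat.cast_le.2 (min_le_left _ _)).trans (Nat.floor_le (by positivity))
  · rw [le_div_iff₀ hN']
    rcases le_total ⌊t * N⌋₊ (N - 1) with h | h
    · rw [min_eq_left h]
      exact (Nat.lt_floor_add_one _).le
    · rw [min_eq_right h, Nat.cast_sub hN, Nat.cast_one, sub_add_cancel]
      nlinarith

lemma eq_of_div_le_le_div {N t : ℝ} (hN : 0 < N) (ht : ∀ j : ℕ, t ≠ j / N) {k k' : ℕ}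
    (hk : (k : ℝ) / N ≤ t ∧ t ≤ ((k : ℝ) + 1) / N)
    (hk' : (k' : ℝ) / N ≤ t ∧ t ≤ ((k' : ℝ) + 1) / N) : k = k' := by
  wlog hlt : k < k' generalizing k k'
  · rcases (not_lt.1 hlt).eq_or_lt with h | h
    · exact h.symm
    · exact (this hk' hk h).symm
  have hle : ((k : ℝ) + 1) / N ≤ k' / N := by
    gcongr
    exact_mod_cast hlt
  exact absurd (le_antisymm hk.2 (hle.trans hk'.1)) (by exact_mod_cast ht (k + 1))

section Dyadic

variable {d J : ℕ}

lemma dyadicCube_eq_preimage (k : Fin d → Fin (2 ^ J)) :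
    dyadicCube d J k = WithLp.ofLp (p := 2) ⁻¹'
      univ.pi fun i => Icc ((k i : ℝ) / 2 ^ J) (((k i : ℝ) + 1) / 2 ^ J) := by
  ext x
  simp only [dyadicCube, mem_ofPred_eq, mem_preimage, mem_univ_pi, mem_Icc]

lemma unitCube_eq_preimage : unitCube d = WithLp.ofLp (p := 2) ⁻¹' univ.pi fun _ => Icc 0 1 := by
  ext x
  simp only [unitCube, mem_ofPred_eq, mem_preimage, mem_univ_pi, mem_Icc]

lemma measurableSet_dyadicCube (k : Fin d → Fin (2 ^ J)) : MeasurableSet (dyadicCube d J k) := by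
  rw [dyadicCube_eq_preimage]
  exact WithLp.measurable_ofLp 2 _ (MeasurableSet.univ_pi fun _ => measurableSet_Icc)

lemma measurableSet_unitCube : MeasurableSet (unitCube d) := by
  rw [unitCube_eq_preimage]
  exact WithLp.measurable_ofLp 2 _ (MeasurableSet.univ_pi fun _ => measurableSet_Icc)

lemma convex_dyadicCube (k : Fin d → Fin (2 ^ J)) : Convex ℝ (dyadicCube d J k) := by
  rw [dyadicCube_eq_preimage]
  exact (convex_pi fun _ _ => convex_Icc _ _).linear_preimage
    (WithLp.linearEquiv 2 ℝ (Fin d → ℝ)).toLinearMap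

lemma dyadicCube_subset_unitCube (k : Fin d → Fin (2 ^ J)) : dyadicCube d J k ⊆ unitCube d := by
  intro x hx i
  have hk : (k i : ℝ) + 1 ≤ 2 ^ J := by exact_mod_cast (k i).isLt
  constructor
  · exact (by positivity : (0 : ℝ) ≤ (k i : ℝ) / 2 ^ J).trans (hx i).1
  · exact (hx i).2.trans ((div_le_one (by positivity)).2 hk)

lemma dist_ofLp_le_of_mem_dyadicCube {k : Fin d → Fin (2 ^ J)} {x y : EuclideanSpace ℝ (Fin d)}
    (hx : x ∈ dyadicCube d J k) (hy : y ∈ dyadicCube d J k) :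
    dist (WithLp.ofLp x) (WithLp.ofLp y) ≤ ((2 : ℝ) ^ J)⁻¹ := by
  refine (dist_pi_le_iff (by positivity)).2 fun i => ?_
  have h : ((k i : ℝ) + 1) / 2 ^ J - (k i : ℝ) / 2 ^ J = ((2 : ℝ) ^ J)⁻¹ := by ring
  rw [Real.dist_eq, abs_le]
  constructor <;> linarith [hx i, hy i]

lemma exists_mem_dyadicCube {x : EuclideanSpace ℝ (Fin d)} (hx : x ∈ unitCube d) :
    ∃ k : Fin d → Fin (2 ^ J), x ∈ dyadicCube d J k := by
  choose k hk hxk using fun i => exists_nat_lt_div_le_le_div (N := 2 ^ J) (by positivity)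
    (hx i).1 (hx i).2
  refine ⟨fun i => ⟨k i, hk i⟩, fun i => ?_⟩
  simpa using hxk i

def dyadicGrid (d J : ℕ) : Set (EuclideanSpace ℝ (Fin d)) :=
  ⋃ (i : Fin d) (j : ℕ), {x | x i = j / 2 ^ J}

lemma measurableSet_dyadicGrid : MeasurableSet (dyadicGrid d J) :=
  .iUnion fun i => .iUnion fun _ =>
    measurableSet_eq_fun ((measurable_pi_apply i).comp (WithLp.measurable_ofLp 2 _))
      measurable_const

lemma volume_dyadicGrid : volume (dyadicGrid d J) = 0 :=
  measure_iUnion_null fun i => measure_iUnion_null fun _ => volume_setOf_apply_eq i _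

lemma eq_of_mem_dyadicCube_of_notMem_dyadicGrid {x : EuclideanSpace ℝ (Fin d)}
    (hx : x ∉ dyadicGrid d J) {k k' : Fin d → Fin (2 ^ J)}
    (h : x ∈ dyadicCube d J k) (h' : x ∈ dyadicCube d J k') : k = k' := by
  have hgrid : ∀ i, ∀ j : ℕ, x i ≠ j / 2 ^ J := fun i j hj =>
    hx (mem_iUnion₂.2 ⟨i, j, hj⟩)
  funext i
  exact Fin.ext (eq_of_div_le_le_div (by positivity) (hgrid i) (h i) (h' i))

end Dyadic

section Thickening

variable {d J : ℕ}

def dyadicThickening (d J : ℕ) (s : Set (EuclideanSpace ℝ (Fin d))) :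
    Set (EuclideanSpace ℝ (Fin d)) :=
  ⋃ (k : Fin d → Fin (2 ^ J)) (_ : (dyadicCube d J k ∩ s).Nonempty), dyadicCube d J k

lemma measurableSet_dyadicThickening (s : Set (EuclideanSpace ℝ (Fin d))) :
    MeasurableSet (dyadicThickening d J s) :=
  .iUnion fun k => .iUnion fun _ => measurableSet_dyadicCube k

lemma dyadicThickening_subset_biUnion {B : Set (EuclideanSpace ℝ (Fin d))}
    {𝒞 : Finset (Set (EuclideanSpace ℝ (Fin d)))} (hB : B ⊆ ⋃ s ∈ 𝒞, s) :
    dyadicThickening d J B ⊆ ⋃ s ∈ 𝒞, dyadicThickening d J s := by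
  simp only [dyadicThickening, iUnion_subset_iff]
  rintro k ⟨w, hwk, hwB⟩ x hx
  obtain ⟨s, hs, hws⟩ := mem_iUnion₂.1 (hB hwB)
  exact mem_biUnion hs (mem_iUnion₂.2 ⟨k, ⟨w, hwk, hws⟩, hx⟩)

lemma exists_dyadicThickening_subset_supClosedBall {s : Set (EuclideanSpace ℝ (Fin d))}
    (hs : Metric.ediam s ≤ ENNReal.ofReal ((2 : ℝ) ^ J)⁻¹) :
    ∃ z, dyadicThickening d J s ⊆ supClosedBall z (2 * ((2 : ℝ) ^ J)⁻¹) := by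
  obtain ⟨z, hz⟩ := exists_subset_supClosedBall_of_ediam_le (by positivity) hs
  refine ⟨z, ?_⟩
  simp only [dyadicThickening, iUnion_subset_iff]
  rintro k ⟨w, hwk, hws⟩ x hx
  calc dist (WithLp.ofLp x) (WithLp.ofLp z)
      ≤ dist (WithLp.ofLp x) (WithLp.ofLp w) + dist (WithLp.ofLp w) (WithLp.ofLp z) :=
        dist_triangle _ _ _
    _ ≤ ((2 : ℝ) ^ J)⁻¹ + ((2 : ℝ) ^ J)⁻¹ :=
        add_le_add (dist_ofLp_le_of_mem_dyadicCube hx hwk) (hz hws)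
    _ = 2 * ((2 : ℝ) ^ J)⁻¹ := by ring

lemma volume_dyadicThickening_union_dyadicGrid_le {B : Set (EuclideanSpace ℝ (Fin d))} {β : ℝ}
    (hcov : ∃ 𝒞 : Finset (Set (EuclideanSpace ℝ (Fin d))),
      (𝒞.card : ℝ) ≤ β * (((2 : ℝ) ^ J)⁻¹) ^ (-((d : ℝ) - 1)) ∧
      (∀ s ∈ 𝒞, Metric.ediam s ≤ ENNReal.ofReal ((2 : ℝ) ^ J)⁻¹) ∧
      B ⊆ ⋃ s ∈ 𝒞, s) :
    volume (dyadicThickening d J B ∪ dyadicGrid d J) ≤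
      ENNReal.ofReal (β * 4 ^ d * ((2 : ℝ) ^ J)⁻¹) := by
  obtain ⟨𝒞, hcard, hdiam, hB⟩ := hcov
  have h := volume_biUnion_le_of_card_le (dyadicThickening d J) (by positivity) zero_le_two hcard
    fun s hs => exists_dyadicThickening_subset_supClosedBall (hdiam s hs)
  norm_num at h
  refine (measure_union_le _ _).trans ?_
  rw [volume_dyadicGrid, add_zero]
  exact (measure_mono (dyadicThickening_subset_biUnion hB)).trans h

end Thickening

lemma continuousOn_of_forall_eq_near {E β : Type*} [SeminormedAddCommGroup E]
    [TopologicalSpace β] {f : E → β} {s t : Set E} (hts : t ⊆ s)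
    (h : ∀ x ∈ t, ∃ ε > 0, ∀ y ∈ s, ‖x - y‖ < ε → f y = f x) :
    ContinuousOn f t := by
  intro x hx
  obtain ⟨ε, hε, hf⟩ := h x hx
  refine continuousWithinAt_const.congr_of_eventuallyEq ?_ rfl
  filter_upwards [mem_nhdsWithin_of_mem_nhds (Metric.ball_mem_nhds x hε), self_mem_nhdsWithin]
    with y hy hyt
  exact hf y (hts hyt) (by rwa [← dist_eq_norm, dist_comm])

lemma aemeasurable_restrict_of_continuousOn_diff {α β : Type*} [MeasurableSpace α]
    [TopologicalSpace α] [OpensMeasurableSpace α] [MeasurableSpace β] [TopologicalSpace β]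
    [BorelSpace β] {μ : Measure α} {f : α → β} {s B : Set α} (hf : ContinuousOn f (s \ B))
    (hB : μ B = 0) (hs : NullMeasurableSet s μ) : AEMeasurable f (μ.restrict s) := by
  rw [← Measure.restrict_congr_set (sdiff_null_ae_eq_self hB)]
  exact hf.aemeasurable₀ (hs.diff (NullMeasurableSet.of_null hB))

lemma apply_eq_apply_of_mem_dyadicCube {d J : ℕ} {ψ : EuclideanSpace ℝ (Fin d) → ℝ}
    {S : Finset ℝ} (hψS : ∀ x, ψ x ∈ S) {B : Set (EuclideanSpace ℝ (Fin d))}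
    (hψ : ContinuousOn ψ (unitCube d \ B)) {k : Fin d → Fin (2 ^ J)}
    (hk : ¬(dyadicCube d J k ∩ B).Nonempty) {x y : EuclideanSpace ℝ (Fin d)}
    (hx : x ∈ dyadicCube d J k) (hy : y ∈ dyadicCube d J k) : ψ x = ψ y := by
  have hsub : dyadicCube d J k ⊆ unitCube d \ B := fun z hz =>
    ⟨dyadicCube_subset_unitCube k hz, fun hzB => hk ⟨z, hz, hzB⟩⟩
  exact (convex_dyadicCube k).isPreconnected.constant_of_mapsTo S.finite_toSet.isDiscrete
    (hψ.mono hsub) (fun z _ => hψS z) hx hy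

lemma exists_fin_factorization {α β : Type*} [Nonempty α] {f : α → β} {S : Finset β}
    {L : ℕ} (hS : S.card ≤ L) (hf : ∀ a, f a ∈ S) :
    ∃ (cs : Fin L → β) (lab : α → Fin L),
      (∀ i, cs i ∈ range f) ∧ ∀ a, cs (lab a) = f a := by
  let ι : S ↪ Fin L := S.equivFin.toEmbedding.trans (Fin.castLEEmb hS)
  let lab : α → Fin L := fun a => ι ⟨f a, hf a⟩
  refine ⟨f ∘ Function.invFun lab, lab, fun i => mem_range_self _, fun a => ?_⟩
  have h : lab (Function.invFun lab (lab a)) = lab a := Function.invFun_eq ⟨a, rfl⟩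
  exact congrArg Subtype.val (ι.injective h)

section DyadicStep

variable {d J L : ℕ}

def dyadicStep (cs : Fin L → ℝ) (lab : (Fin d → Fin (2 ^ J)) → Fin L) :
    EuclideanSpace ℝ (Fin d) → ℝ :=
  fun x => ∑ i, Set.indicator (⋃ k ∈ lab ⁻¹' {i}, dyadicCube d J k) (fun _ => cs i) x

lemma dyadicStep_mem_candidateClass {m M : ℝ} {cs : Fin L → ℝ}
    (hcs : ∀ i, m ≤ cs i ∧ cs i ≤ M) (lab : (Fin d → Fin (2 ^ J)) → Fin L) :
    dyadicStep cs lab ∈ candidateClass d L J m M := by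
  refine ⟨cs, fun i => lab ⁻¹' {i}, hcs, fun i j hij => ?_, ?_, rfl⟩
  · exact Disjoint.preimage lab (disjoint_singleton.2 hij)
  · exact eq_univ_of_forall fun k => mem_iUnion.2 ⟨lab k, rfl⟩

lemma measurable_dyadicStep (cs : Fin L → ℝ) (lab : (Fin d → Fin (2 ^ J)) → Fin L) :
    Measurable (dyadicStep cs lab) :=
  Finset.measurable_sum _ fun _ _ => measurable_const.indicator <|
    .biUnion (to_countable _) fun k _ => measurableSet_dyadicCube k

lemma dyadicStep_apply_of_mem (cs : Fin L → ℝ) (lab : (Fin d → Fin (2 ^ J)) → Fin L)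
    {k : Fin d → Fin (2 ^ J)} {x : EuclideanSpace ℝ (Fin d)} (hk : x ∈ dyadicCube d J k)
    (hx : x ∉ dyadicGrid d J) : dyadicStep cs lab x = cs (lab k) := by
  rw [dyadicStep, Finset.sum_eq_single (lab k)]
  · exact indicator_of_mem (mem_biUnion (show k ∈ lab ⁻¹' {lab k} from rfl) hk) _
  · intro i _ hi
    refine indicator_of_notMem (fun hx' => hi ?_) _
    obtain ⟨k', hk', hxk'⟩ := mem_iUnion₂.1 hx'
    rw [← hk', eq_of_mem_dyadicCube_of_notMem_dyadicGrid hx hxk' hk]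
  · exact fun h => absurd (Finset.mem_univ _) h

def dyadicCorner (k : Fin d → Fin (2 ^ J)) : EuclideanSpace ℝ (Fin d) :=
  WithLp.toLp 2 fun i => (k i : ℝ) / 2 ^ J

lemma dyadicCorner_mem (k : Fin d → Fin (2 ^ J)) : dyadicCorner k ∈ dyadicCube d J k :=
  fun i => ⟨le_rfl, by simp only [dyadicCorner]; gcongr; linarith⟩

end DyadicStep

lemma exists_mem_candidateClass_eq_off_dyadicThickening {d L J : ℕ} {m M : ℝ}
    {ψ : EuclideanSpace ℝ (Fin d) → ℝ} {S : Finset ℝ} (hScard : S.card ≤ L)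
    (hψS : ∀ x, ψ x ∈ S) (hψb : ∀ x, ψ x ∈ Icc m M)
    {B : Set (EuclideanSpace ℝ (Fin d))}
    (hψ : ContinuousOn ψ (unitCube d \ B)) :
    ∃ φ ∈ candidateClass d L J m M, Measurable φ ∧
      (∀ x ∈ unitCube d, x ∉ dyadicGrid d J → φ x ∈ Icc m M) ∧
      ∀ x ∈ unitCube d, x ∉ dyadicThickening d J B ∪ dyadicGrid d J → φ x = ψ x := by
  obtain ⟨cs, lab, hcs, hlab⟩ := exists_fin_factorization hScard hψS
  have hcsb : ∀ i, m ≤ cs i ∧ cs i ≤ M := fun i => by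
    obtain ⟨x, hx⟩ := hcs i
    exact hx ▸ hψb x
  refine ⟨dyadicStep cs (lab ∘ dyadicCorner), dyadicStep_mem_candidateClass hcsb _,
    measurable_dyadicStep _ _, fun x hx hxg => ?_, fun x hx hxE => ?_⟩
  · obtain ⟨k, hk⟩ := exists_mem_dyadicCube (J := J) hx
    rw [dyadicStep_apply_of_mem _ _ hk hxg]
    exact hcsb _
  · obtain ⟨k, hk⟩ := exists_mem_dyadicCube (J := J) hx
    have hgood : ¬(dyadicCube d J k ∩ B).Nonempty := fun h =>
      hxE (Or.inl (mem_iUnion₂.2 ⟨k, h, hk⟩))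
    rw [dyadicStep_apply_of_mem _ _ hk fun h => hxE (Or.inr h), Function.comp_apply, hlab]
    exact apply_eq_apply_of_mem_dyadicCube hψS hψ hgood (dyadicCorner_mem k) hk

section Divergence

variable {α : Type*} [MeasurableSpace α] {μ : Measure α}

lemma integral_sub_integral_le_of_eq_off [IsFiniteMeasure μ] {f g : α → ℝ}
    (hf : Integrable f μ) (hg : Integrable g μ) {E : Set α} (hE : MeasurableSet E) {δ : ℝ}
    (hfg : ∀ᵐ x ∂μ, f x - g x ≤ δ) (heq : ∀ᵐ x ∂μ, x ∉ E → f x = g x) :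
    ∫ x, f x ∂μ - ∫ x, g x ∂μ ≤ δ * μ.real E := by
  rw [← integral_sub hf hg, mul_comm, ← smul_eq_mul, ← integral_indicator_const δ hE]
  refine integral_mono_ae (hf.sub hg) ((integrable_const δ).indicator hE) ?_
  filter_upwards [hfg, heq] with x hx hxE
  by_cases hxE' : x ∈ E
  · simpa [indicator_of_mem hxE'] using hx
  · simp [indicator_of_notMem hxE', hxE hxE']

lemma integrable_of_ae_mem_Icc [IsFiniteMeasure μ] {f : α → ℝ} (hf : AEMeasurable f μ)
    {a b : ℝ} (hfab : ∀ᵐ x ∂μ, f x ∈ Icc a b) : Integrable f μ :=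
  memLp_one_iff_integrable.1 (memLp_of_bounded hfab hf.aestronglyMeasurable 1)

lemma log_mem_Icc_log {m M t : ℝ} (hm : 0 < m) (ht : t ∈ Icc m M) :
    Real.log t ∈ Icc (Real.log m) (Real.log M) :=
  ⟨Real.log_le_log hm ht.1, Real.log_le_log (hm.trans_le ht.1) ht.2⟩

lemma measureReal_withDensity_le {p : α → ℝ} {C : ℝ} (hC : 0 ≤ C)
    (hp : ∀ᵐ x ∂μ, p x ≤ C)
    {E : Set α} {V : ℝ} (hV : 0 ≤ V) (hE : μ E ≤ ENNReal.ofReal V) :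
    (μ.withDensity fun x => ENNReal.ofReal (p x)).real E ≤ C * V := by
  have hle : μ.withDensity (fun x => ENNReal.ofReal (p x)) ≤ ENNReal.ofReal C • μ := by
    rw [← withDensity_const]
    exact withDensity_mono (hp.mono fun x hx => ENNReal.ofReal_le_ofReal hx)
  refine ENNReal.toReal_le_of_le_ofReal (by positivity) ((hle E).trans ?_)
  rw [Measure.smul_apply, smul_eq_mul, ENNReal.ofReal_mul hC]
  gcongr

end Divergence

section Dfun

variable {d : ℕ} {P Q : Measure (EuclideanSpace ℝ (Fin d))}

lemma Dfun_sub_Dfun_le [IsFiniteMeasure P] [IsFiniteMeasure Q]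
    {μ : Measure (EuclideanSpace ℝ (Fin d))} (hP : P ≪ μ) (hQ : Q ≪ μ)
    {m M : ℝ} (hm : 0 < m) {ψ φ : EuclideanSpace ℝ (Fin d) → ℝ} (hψ : AEMeasurable ψ μ)
    (hφ : AEMeasurable φ μ) (hψb : ∀ᵐ x ∂μ, ψ x ∈ Icc m M)
    (hφb : ∀ᵐ x ∂μ, φ x ∈ Icc m M)
    {E : Set (EuclideanSpace ℝ (Fin d))} (hE : MeasurableSet E)
    (heq : ∀ᵐ x ∂μ, x ∉ E → ψ x = φ x) :
    Dfun P Q ψ - Dfun P Q φ ≤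
      (Real.log M - Real.log m) * P.real E + (M - m) * Q.real E := by
  have hlog : ∀ᵐ x ∂μ, Real.log (ψ x) - Real.log (φ x) ≤ Real.log M - Real.log m := by
    filter_upwards [hψb, hφb] with x hψx hφx
    linarith [(log_mem_Icc_log hm hψx).2, (log_mem_Icc_log hm hφx).1]
  have hlin : ∀ᵐ x ∂μ, φ x - ψ x ≤ M - m := by
    filter_upwards [hψb, hφb] with x hψx hφx
    linarith [hψx.1, hφx.2]
  have hψP : Integrable ψ P := integrable_of_ae_mem_Icc (hψ.mono_ac hP) (hP.ae_le hψb)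
  have hφP : Integrable φ P := integrable_of_ae_mem_Icc (hφ.mono_ac hP) (hP.ae_le hφb)
  have hlogψ : Integrable (fun x => Real.log (ψ x)) P :=
    integrable_of_ae_mem_Icc (Real.measurable_log.comp_aemeasurable (hψ.mono_ac hP))
      (hP.ae_le (hψb.mono fun x hx => log_mem_Icc_log hm hx))
  have hlogφ : Integrable (fun x => Real.log (φ x)) P :=
    integrable_of_ae_mem_Icc (Real.measurable_log.comp_aemeasurable (hφ.mono_ac hP))
      (hP.ae_le (hφb.mono fun x hx => log_mem_Icc_log hm hx))
  have hψQ : Integrable ψ Q := integrable_of_ae_mem_Icc (hψ.mono_ac hQ) (hQ.ae_le hψb)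
  have hφQ : Integrable φ Q := integrable_of_ae_mem_Icc (hφ.mono_ac hQ) (hQ.ae_le hφb)
  have hP_log := integral_sub_integral_le_of_eq_off hlogψ hlogφ hE (hP.ae_le hlog)
    (hP.ae_le (heq.mono fun x hx hxE => by rw [hx hxE]))
  have hQ_lin := integral_sub_integral_le_of_eq_off hφQ hψQ hE (hQ.ae_le hlin)
    (hQ.ae_le (heq.mono fun x hx hxE => (hx hxE).symm))
  unfold Dfun
  linarith

lemma Dfun_sub_Dfun_le_of_withDensity [IsFiniteMeasure P] [IsFiniteMeasure Q]
    {μ : Measure (EuclideanSpace ℝ (Fin d))} {p q : EuclideanSpace ℝ (Fin d) → ℝ}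
    (hP : P = μ.withDensity fun x => ENNReal.ofReal (p x))
    (hQ : Q = μ.withDensity fun x => ENNReal.ofReal (q x)) {C : ℝ} (hC : 0 ≤ C)
    (hp : ∀ᵐ x ∂μ, p x ≤ C) (hq : ∀ᵐ x ∂μ, q x ≤ C) {m M : ℝ} (hm : 0 < m)
    (hmM : m ≤ M) {ψ φ : EuclideanSpace ℝ (Fin d) → ℝ} (hψ : AEMeasurable ψ μ)
    (hφ : AEMeasurable φ μ)
    (hψb : ∀ᵐ x ∂μ, ψ x ∈ Icc m M) (hφb : ∀ᵐ x ∂μ, φ x ∈ Icc m M)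
    {E : Set (EuclideanSpace ℝ (Fin d))} (hE : MeasurableSet E)
    (heq : ∀ᵐ x ∂μ, x ∉ E → ψ x = φ x) {V : ℝ} (hV : 0 ≤ V)
    (hμE : μ E ≤ ENNReal.ofReal V) :
    Dfun P Q ψ - Dfun P Q φ ≤ (Real.log M - Real.log m + (M - m)) * C * V := by
  have hPE : P.real E ≤ C * V := hP ▸ measureReal_withDensity_le hC hp hV hμE
  have hQE : Q.real E ≤ C * V := hQ ▸ measureReal_withDensity_le hC hq hV hμE
  have hlog : 0 ≤ Real.log M - Real.log m := sub_nonneg.2 (Real.log_le_log hm hmM)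
  calc Dfun P Q ψ - Dfun P Q φ
      ≤ (Real.log M - Real.log m) * P.real E + (M - m) * Q.real E :=
        Dfun_sub_Dfun_le (hP ▸ withDensity_absolutelyContinuous _ _)
          (hQ ▸ withDensity_absolutelyContinuous _ _) hm hψ hφ hψb hφb hE heq
    _ ≤ (Real.log M - Real.log m) * (C * V) + (M - m) * (C * V) := by gcongr
    _ = (Real.log M - Real.log m + (M - m)) * C * V := by ring

lemma Dfun_le_of_le [IsProbabilityMeasure P] {φ : EuclideanSpace ℝ (Fin d) → ℝ} {A : ℝ}
    (hφ₀ : ∀ x, 0 ≤ φ x) (hφA : ∀ x, φ x ≤ A) : Dfun P Q φ ≤ 1 + A := by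
  have hA : 0 ≤ A := (hφ₀ 0).trans (hφA 0)
  have hlog : ∫ x, Real.log (φ x) ∂P ≤ A := by
    by_cases hint : Integrable (fun x => Real.log (φ x)) P
    · calc ∫ x, Real.log (φ x) ∂P ≤ ∫ _, A ∂P :=
            integral_mono hint (integrable_const A) fun x =>
              (Real.log_le_self (hφ₀ x)).trans (hφA x)
        _ = A := by simp
    · rw [integral_undef hint]
      exact hA
  have hQ : 0 ≤ ∫ x, φ x ∂Q := integral_nonneg hφ₀
  unfold Dfun
  linarith

lemma bddAbove_Dfun_image_candidateClass [IsProbabilityMeasure P] {L J : ℕ} {m M : ℝ}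
    (hm : 0 ≤ m) :
    BddAbove (Dfun P Q '' candidateClass d L J m M) := by
  refine ⟨1 + L * M, ?_⟩
  rintro _ ⟨φ, ⟨cs, K, hcs, -, -, rfl⟩, rfl⟩
  have hterm : ∀ x i, 0 ≤ Set.indicator (⋃ k ∈ K i, dyadicCube d J k) (fun _ => cs i) x ∧
      Set.indicator (⋃ k ∈ K i, dyadicCube d J k) (fun _ => cs i) x ≤ M := fun x i =>
    ⟨indicator_nonneg (fun _ _ => hm.trans (hcs i).1) x,
      (indicator_le_self' (fun _ _ => hm.trans (hcs i).1) x).trans (hcs i).2⟩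
  refine Dfun_le_of_le (fun x => Finset.sum_nonneg fun i _ => (hterm x i).1) fun x => ?_
  calc _ ≤ ∑ _i : Fin L, M := Finset.sum_le_sum fun i _ => (hterm x i).2
    _ = L * M := by simp

end Dfun

lemma log_sub_log_add_sub_mul_le {L : ℕ} (hL : 2 ≤ L) {m M c C : ℝ} (hm : 0 < m)
    (hmM : m ≤ M) (hc : 0 < c) (hcC : c ≤ C) (hmc : m ≤ c / C) :
    (Real.log M - Real.log m + (M - m)) * C ≤
      ((C + c * m) / m) * L * (M + (C / c) * (C / c + 1)) := by
  have hC : 0 < C := hc.trans_le hcC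
  have hM : 0 < M := hm.trans_le hmM
  have hm1 : m ≤ 1 := hmc.trans ((div_le_one hC).2 hcC)
  have hq : 1 ≤ C / c := (one_le_div hc).2 hcC
  have hL' : (2 : ℝ) ≤ L := by exact_mod_cast hL
  have hlog : Real.log M - Real.log m ≤ M / m - 1 := by
    rw [← Real.log_div hM.ne' hm.ne']
    exact Real.log_le_sub_one_of_pos (by positivity)
  have hMm : M ≤ M / m := le_div_self hM.le hm hm1
  calc (Real.log M - Real.log m + (M - m)) * C ≤ (2 * (M / m)) * C := by
        gcongr
        linarith
    _ = (C / m) * (2 * M) := by ring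
    _ ≤ (C / m) * (L * (M + (C / c) * (C / c + 1))) := by
        gcongr
        nlinarith
    _ ≤ ((C + c * m) / m) * L * (M + (C / c) * (C / c + 1)) := by
        rw [← mul_assoc]
        gcongr
        nlinarith

theorem approximation_error_general
    (d L J : ℕ) (hL : 2 ≤ L)
    (m M c C β : ℝ) (hm : 0 < m) (hmM : m ≤ M) (hc : 0 < c) (hcC : c ≤ C)
    (hmc : m ≤ c / C) (hβ : 0 < β)
    (p q : EuclideanSpace ℝ (Fin d) → ℝ)
    (P Q : Measure (EuclideanSpace ℝ (Fin d)))
    [IsProbabilityMeasure P] [IsProbabilityMeasure Q]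
    (hP : P = (volume.restrict (unitCube d)).withDensity
        fun x => ENNReal.ofReal (p x))
    (hQ : Q = (volume.restrict (unitCube d)).withDensity
        fun x => ENNReal.ofReal (q x))
    (hp : ∀ᵐ x ∂(volume.restrict (unitCube d)), c ≤ p x ∧ p x ≤ C)
    (hq : ∀ᵐ x ∂(volume.restrict (unitCube d)), c ≤ q x ∧ q x ≤ C)
    (ψ : EuclideanSpace ℝ (Fin d) → ℝ)
    (S : Finset ℝ) (hScard : S.card ≤ L) (hψS : ∀ x, ψ x ∈ S)
    (hψb : ∀ x, ψ x ∈ Set.Icc m M)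
    (B : Set (EuclideanSpace ℝ (Fin d)))
    (hloc : ∀ x ∈ unitCube d \ B, ∃ ε > 0,
      ∀ y ∈ unitCube d, ‖x - y‖ < ε → ψ y = ψ x)
    (hcov : ∀ r : ℝ, 0 < r → ∃ 𝒞 : Finset (Set (EuclideanSpace ℝ (Fin d))),
      (𝒞.card : ℝ) ≤ β * r ^ (-((d : ℝ) - 1)) ∧
      (∀ s ∈ 𝒞, EMetric.diam s ≤ ENNReal.ofReal r) ∧
      B ⊆ ⋃ s ∈ 𝒞, s) :
    (∃ φ ∈ candidateClass d L J m M,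
      Dfun P Q ψ - Dfun P Q φ ≤
        ((C + c * m) / m) * 2 ^ (2 * d) * β * L * (M + (C / c) * (C / c + 1))
          * (2 : ℝ) ^ (-(J : ℤ))) ∧
    Dfun P Q ψ - sSup (Dfun P Q '' candidateClass d L J m M) ≤
      ((C + c * m) / m) * 2 ^ (2 * d) * β * L * (M + (C / c) * (C / c + 1))
        * (2 : ℝ) ^ (-(J : ℤ)) := by
  set μ := volume.restrict (unitCube d)
  set V := β * 4 ^ d * ((2 : ℝ) ^ J)⁻¹
  have hψ : ContinuousOn ψ (unitCube d \ B) := continuousOn_of_forall_eq_near sdiff_subset hloc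
  obtain ⟨φ, hφ, hφmeas, hφb, hφψ⟩ :=
    exists_mem_candidateClass_eq_off_dyadicThickening (J := J) hScard hψS hψb hψ
  have hμE : μ (dyadicThickening d J B ∪ dyadicGrid d J) ≤ ENNReal.ofReal V :=
    (Measure.restrict_apply_le _ _).trans
      (volume_dyadicThickening_union_dyadicGrid_le (hcov _ (by positivity)))
  have hgood : ∀ᵐ x ∂μ, x ∈ unitCube d ∧ x ∉ dyadicGrid d J :=
    (ae_restrict_mem measurableSet_unitCube).and
      (ae_restrict_of_ae (measure_eq_zero_iff_ae_notMem.1 volume_dyadicGrid))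
  have hdiff := Dfun_sub_Dfun_le_of_withDensity hP hQ (hc.le.trans hcC) (hp.mono fun _ h => h.2)
    (hq.mono fun _ h => h.2) hm hmM
    (aemeasurable_restrict_of_continuousOn_diff hψ (volume_eq_zero_of_forall_covering hcov)
      measurableSet_unitCube.nullMeasurableSet)
    hφmeas.aemeasurable (ae_of_all _ hψb) (hgood.mono fun x hx => hφb x hx.1 hx.2)
    ((measurableSet_dyadicThickening B).union measurableSet_dyadicGrid)
    (hgood.mono fun x hx hxE => (hφψ x hx.1 hxE).symm) (by positivity) hμE
  have hbound : Dfun P Q ψ - Dfun P Q φ ≤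
      ((C + c * m) / m) * 2 ^ (2 * d) * β * L * (M + (C / c) * (C / c + 1))
        * (2 : ℝ) ^ (-(J : ℤ)) := by
    refine hdiff.trans ((mul_le_mul_of_nonneg_right
      (log_sub_log_add_sub_mul_le hL hm hmM hc hcC hmc) (by positivity)).trans_eq ?_)
    rw [zpow_neg, zpow_natCast, pow_mul]
    ring
  have hsup : Dfun P Q φ ≤ sSup (Dfun P Q '' candidateClass d L J m M) :=
    le_csSup (bddAbove_Dfun_image_candidateClass hm.le) ⟨φ, hφ, rfl⟩
  exact ⟨⟨φ, hφ, hbound⟩, (sub_le_sub_left hsup _).trans hbound⟩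

/-- Approximation-error theorem: for `P`, `Q` with densities in `[c, C]` on
`[0,1]^d`, and an `L`-level piecewise constant rule `ψ` with values in `[m, M]`
that is locally constant off a boundary set `B(ψ)` satisfying the covering
condition `N(r) ≤ β·r^{-(d-1)}`, there exists `φ` in the candidate class
`Φ(L,J,m,M)` with `D(ψ) - D(φ) ≤ K·2^{-J}`, where
`K = ((C + c·m)/m)·2^{2d}·β·L·(M + (C/c)·(C/c + 1))`; consequently
`D(ψ) - sup_{φ ∈ Φ(L,J,m,M)} D(φ) ≤ K·2^{-J}`. -/
theorem approximation_error
    (d L J : ℕ) (hd : 1 ≤ d) (hL : 2 ≤ L)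
    (m M c C β : ℝ) (hm : 0 < m) (hmM : m ≤ M) (hc : 0 < c) (hcC : c ≤ C)
    (hmc : m ≤ c / C) (hCM : C / c ≤ M) (hβ : 0 < β)
    (p q : EuclideanSpace ℝ (Fin d) → ℝ)
    (P Q : Measure (EuclideanSpace ℝ (Fin d)))
    [IsProbabilityMeasure P] [IsProbabilityMeasure Q]
    (hP : P = (volume.restrict (unitCube d)).withDensity
        fun x => ENNReal.ofReal (p x))
    (hQ : Q = (volume.restrict (unitCube d)).withDensity
        fun x => ENNReal.ofReal (q x))
    (hp : ∀ᵐ x ∂(volume.restrict (unitCube d)), c ≤ p x ∧ p x ≤ C)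
    (hq : ∀ᵐ x ∂(volume.restrict (unitCube d)), c ≤ q x ∧ q x ≤ C)
    (ψ : EuclideanSpace ℝ (Fin d) → ℝ)
    (S : Finset ℝ) (hScard : S.card ≤ L) (hψS : ∀ x, ψ x ∈ S)
    (hψb : ∀ x, ψ x ∈ Set.Icc m M)
    (B : Set (EuclideanSpace ℝ (Fin d))) (hB : B ⊆ unitCube d)
    (hloc : ∀ x ∈ unitCube d \ B, ∃ ε > 0,
      ∀ y ∈ unitCube d, ‖x - y‖ < ε → ψ y = ψ x)
    (hcov : ∀ r : ℝ, 0 < r → ∃ 𝒞 : Finset (Set (EuclideanSpace ℝ (Fin d))),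
      (𝒞.card : ℝ) ≤ β * r ^ (-((d : ℝ) - 1)) ∧
      (∀ s ∈ 𝒞, EMetric.diam s ≤ ENNReal.ofReal r) ∧
      B ⊆ ⋃ s ∈ 𝒞, s) :
    (∃ φ ∈ candidateClass d L J m M,
      Dfun P Q ψ - Dfun P Q φ ≤
        ((C + c * m) / m) * 2 ^ (2 * d) * β * L * (M + (C / c) * (C / c + 1))
          * (2 : ℝ) ^ (-(J : ℤ))) ∧
    Dfun P Q ψ - sSup (Dfun P Q '' candidateClass d L J m M) ≤
      ((C + c * m) / m) * 2 ^ (2 * d) * β * L * (M + (C / c) * (C / c + 1))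
        * (2 : ℝ) ^ (-(J : ℤ)) :=
  approximation_error_general d L J hL m M c C β hm hmM hc hcC hmc hβ p q P Q hP hQ hp hq ψ S hScard
    hψS hψb B hloc hcov

end
end
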